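/- Let α, β > −1 be real and let m, n be natural numbers with m ≠ n. Then ∫_{−1}^{1} J_m^{(α,β)}(x) J_n^{(α,β)}(x) (1 − x)^{α} (1 + x)^{β} dx = 0. That is, the Jacobi polynomials with parameters (α, β) are pairwise orthogonal on (−1, 1) with respect to the weight function ω(x) = (1 − x)^{α}(1 + x)^{β}. -/

import Mathlib

/-! Expand `J_n` in powers of `(x - 1) / 2`. Integrating by parts against
`(1 - x)^(α+1) (1 + x)^(β+1)`, which vanishes at `±1`, gives the moments
`∫ ((x - 1) / 2)^p ω = (-1)^p (α+1)_p / (α+β+2)_p ∫ ω`. For `j < n` this turns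
`∫ ((x - 1) / 2)^j J_n ω` into an alternating binomial sum `∑ (-1)^k C(n,k) P(k)` with `P` a
polynomial of degree `< n`, i.e. an `n`-th forward difference of `P`, which is zero. As `J_m` is a
polynomial of degree `m < n` in `(x - 1) / 2`, it is orthogonal to `J_n`. -/

open Real MeasureTheory intervalIntegral Finset Nat

/-- The rising factorial (Pochhammer symbol) `(a)_k = a (a+1) ⋯ (a+k-1)`, with `(a)_0 = 1`. -/
noncomputable def risingFactorial (a : ℝ) (k : ℕ) : ℝ :=
  ∏ j ∈ Finset.range k, (a + j)

/-- The Jacobi polynomial, given by the explicit formula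
`J n^(α,β) x = ((α+1)_n / n!) ∑_{k=0}^{n} C(n,k) ((n+α+β+1)_k / (α+1)_k) ((x-1)/2)^k`. -/
noncomputable def jacobiPoly (α β : ℝ) (n : ℕ) (x : ℝ) : ℝ :=
  (risingFactorial (α + 1) n / (n ! : ℝ)) *
    ∑ k ∈ Finset.range (n + 1),
      (n.choose k : ℝ) *
        (risingFactorial ((n : ℝ) + α + β + 1) k / risingFactorial (α + 1) k) *
        ((x - 1) / 2) ^ k

open Polynomial

lemma risingFactorial_succ (a : ℝ) (k : ℕ) :
    risingFactorial a (k + 1) = risingFactorial a k * (a + k) :=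
  prod_range_succ _ k

lemma risingFactorial_pos {a : ℝ} (ha : 0 < a) (k : ℕ) : 0 < risingFactorial a k :=
  prod_pos fun j _ => by positivity

lemma risingFactorial_add (a : ℝ) (j k : ℕ) :
    risingFactorial a (j + k) = risingFactorial a j * risingFactorial (a + j) k := by
  simp only [risingFactorial, prod_range_add, Nat.cast_add, add_assoc]

lemma Polynomial.sum_range_neg_one_pow_mul_choose_mul_eval_eq_zero {R : Type*} [CommRing R]
    {P : R[X]} {n : ℕ} (hP : P.natDegree < n) :
    ∑ k ∈ range (n + 1), (-1 : R) ^ k * n.choose k * P.eval (k : R) = 0 := by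
  have h := congr_fun (fwdDiff_iter_eq_zero_of_degree_lt hP) 0
  rw [fwdDiff_iter_eq_sum_shift] at h
  calc _ = (-1) ^ n * ∑ k ∈ range (n + 1),
          ((-1 : ℤ) ^ (n - k) * n.choose k) • P.eval (0 + k • (1 : R)) := by
        rw [mul_sum]
        refine sum_congr rfl fun k hk => ?_
        obtain ⟨d, rfl⟩ := Nat.exists_eq_add_of_le (Nat.lt_succ_iff.mp (mem_range.mp hk))
        simp only [zsmul_eq_mul, Int.cast_mul, Int.cast_pow, Int.cast_neg, Int.cast_one,
          Int.cast_natCast, nsmul_one, zero_add, Nat.add_sub_cancel_left]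
        have hsq : (-1 : R) ^ d * (-1) ^ d = 1 := by
          rw [← pow_add, ← two_mul, pow_mul, neg_one_sq, one_pow]
        rw [pow_add]
        linear_combination (-((-1 : R) ^ k * (k + d).choose k * P.eval (k : R))) * hsq
    _ = 0 := by rw [h, Pi.zero_apply, mul_zero]

lemma sum_range_neg_one_pow_mul_choose_mul_risingFactorial_mul_risingFactorial_eq_zero
    {n j d : ℕ} (h : j + d < n) (c e : ℝ) :
    ∑ k ∈ range (n + 1), (-1 : ℝ) ^ k * n.choose k *
      (risingFactorial (c + k) j * risingFactorial (e + k) d) = 0 := by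
  set P : ℝ[X] := (∏ i ∈ range j, (X + C (c + i))) * ∏ i ∈ range d, (X + C (e + i))
  have hP : P.natDegree < n := by
    have hprod (a : ℝ) (m : ℕ) : (∏ i ∈ range m, (X + C (a + i))).natDegree ≤ m :=
      (natDegree_prod_le _ _).trans (by simp only [natDegree_X_add_C, sum_const, card_range,
        smul_eq_mul, mul_one, le_refl])
    exact natDegree_mul_le.trans_lt ((Nat.add_le_add (hprod c j) (hprod e d)).trans_lt h)
  convert sum_range_neg_one_pow_mul_choose_mul_eval_eq_zero hP using 3 with k
  simp only [P, risingFactorial, eval_mul, eval_prod, eval_add, eval_X, eval_C]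
  congr 1 <;> exact prod_congr rfl fun i _ => by ring

noncomputable def jacobiWeight (a b x : ℝ) : ℝ :=
  (1 - x) ^ a * (1 + x) ^ b

section JacobiWeight

variable {a b : ℝ}

lemma intervalIntegrable_jacobiWeight (ha : -1 < a) (hb : -1 < b) :
    IntervalIntegrable (jacobiWeight a b) volume (-1) 1 := by
  have left : IntervalIntegrable (jacobiWeight a b) volume (-1) 0 := by
    have hb' : IntervalIntegrable (fun x : ℝ => (1 + x) ^ b) volume (-1) 0 := by
      simpa [add_comm] using (intervalIntegrable_rpow' hb (a := 0) (b := 1)).comp_add_right 1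
    refine hb'.continuousOn_mul (ContinuousOn.rpow_const (by fun_prop) fun x hx => Or.inl ?_)
    rw [Set.uIcc_of_le (by norm_num)] at hx
    linarith [hx.2]
  have right : IntervalIntegrable (jacobiWeight a b) volume 0 1 := by
    have ha' : IntervalIntegrable (fun x : ℝ => (1 - x) ^ a) volume 0 1 := by
      simpa using ((intervalIntegrable_rpow' ha (a := 0) (b := 1)).comp_sub_left 1).symm
    refine ha'.mul_continuousOn (ContinuousOn.rpow_const (by fun_prop) fun x hx => Or.inl ?_)
    rw [Set.uIcc_of_le (by norm_num)] at hx
    linarith [hx.1]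
  exact left.trans right

lemma hasDerivAt_jacobiWeight_add_one_add_one {x : ℝ} (hx : x ∈ Set.Ioo (-1) 1) :
    HasDerivAt (jacobiWeight (a + 1) (b + 1))
      ((a + b + 2) * jacobiWeight (a + 1) b x - 2 * (a + 1) * jacobiWeight a b x) x := by
  have hx₁ : 0 < 1 - x := by linarith [hx.2]
  have hx₂ : 0 < 1 + x := by linarith [hx.1]
  have h₁ := ((hasDerivAt_id x).const_sub 1).rpow_const (p := a + 1) (Or.inl hx₁.ne')
  have h₂ := ((hasDerivAt_id x).const_add 1).rpow_const (p := b + 1) (Or.inl hx₂.ne')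
  refine (h₁.mul h₂).congr_deriv ?_
  simp only [jacobiWeight, id, add_sub_cancel_right, Real.rpow_add_one hx₁.ne',
    Real.rpow_add_one hx₂.ne']
  ring

lemma integral_jacobiWeight_add_one (ha : -1 < a) (hb : -1 < b) :
    (a + b + 2) * ∫ x in (-1:ℝ)..1, jacobiWeight (a + 1) b x
      = 2 * (a + 1) * ∫ x in (-1:ℝ)..1, jacobiWeight a b x := by
  have ha₁ : 0 < a + 1 := by linarith
  have hb₁ : 0 < b + 1 := by linarith
  have hcont : ContinuousOn (jacobiWeight (a + 1) (b + 1)) (Set.Icc (-1) 1) :=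
    (((continuous_const.sub continuous_id).rpow_const fun _ => Or.inr ha₁.le).mul
      ((continuous_const.add continuous_id).rpow_const fun _ => Or.inr hb₁.le)).continuousOn
  have hint₁ := (intervalIntegrable_jacobiWeight (by linarith : -1 < a + 1) hb).const_mul
    (a + b + 2)
  have hint₀ := (intervalIntegrable_jacobiWeight ha hb).const_mul (2 * (a + 1))
  have hftc := integral_eq_sub_of_hasDerivAt_of_le (by norm_num) hcont
    (fun x hx => hasDerivAt_jacobiWeight_add_one_add_one hx) (hint₁.sub hint₀)
  rw [integral_sub hint₁ hint₀, intervalIntegral.integral_const_mul,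
    intervalIntegral.integral_const_mul] at hftc
  have hend : jacobiWeight (a + 1) (b + 1) 1 = 0 ∧ jacobiWeight (a + 1) (b + 1) (-1) = 0 := by
    simp [jacobiWeight, Real.zero_rpow ha₁.ne', Real.zero_rpow hb₁.ne']
  rw [hend.1, hend.2] at hftc
  linarith

lemma risingFactorial_mul_integral_jacobiWeight_add_nat (ha : -1 < a) (hb : -1 < b) (p : ℕ) :
    risingFactorial (a + b + 2) p * ∫ x in (-1:ℝ)..1, jacobiWeight (a + p) b x
      = 2 ^ p * risingFactorial (a + 1) p * ∫ x in (-1:ℝ)..1, jacobiWeight a b x := by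
  induction p with
  | zero => simp [risingFactorial]
  | succ p ih =>
    have hstep :=
      integral_jacobiWeight_add_one (by linarith [p.cast_nonneg (α := ℝ)] : -1 < a + p) hb
    rw [risingFactorial_succ, risingFactorial_succ, pow_succ, Nat.cast_succ, ← add_assoc]
    linear_combination risingFactorial (a + b + 2) p * hstep + 2 * (a + p + 1) * ih

lemma integral_pow_mul_jacobiWeight (ha : -1 < a) (hb : -1 < b) (p : ℕ) :
    ∫ x in (-1:ℝ)..1, ((x - 1) / 2) ^ p * jacobiWeight a b x
      = (-1) ^ p * (risingFactorial (a + 1) p / risingFactorial (a + b + 2) p) *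
        ∫ x in (-1:ℝ)..1, jacobiWeight a b x := by
  have hshift : ∫ x in (-1:ℝ)..1, ((x - 1) / 2) ^ p * jacobiWeight a b x
      = (-1 / 2) ^ p * ∫ x in (-1:ℝ)..1, jacobiWeight (a + p) b x := by
    rw [← intervalIntegral.integral_const_mul]
    refine integral_congr_ae ((volume.ae_ne 1).mono fun x hne hx => ?_)
    rw [Set.uIoc_of_le (by norm_num)] at hx
    have hx₁ : 0 < 1 - x := sub_pos.mpr (lt_of_le_of_ne hx.2 hne)
    simp only [jacobiWeight, Real.rpow_add hx₁, Real.rpow_natCast]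
    rw [show (x - 1) / 2 = -1 / 2 * (1 - x) by ring, mul_pow]
    ring
  have hpos := risingFactorial_pos (by linarith : 0 < a + b + 2) p
  rw [hshift, mul_div_assoc', div_mul_eq_mul_div, eq_div_iff hpos.ne']
  have hsign : (-1 / 2 : ℝ) ^ p * 2 ^ p = (-1) ^ p := by rw [← mul_pow]; norm_num
  linear_combination (-1 / 2 : ℝ) ^ p * risingFactorial_mul_integral_jacobiWeight_add_nat ha hb p
    + risingFactorial (a + 1) p * (∫ x in (-1:ℝ)..1, jacobiWeight a b x) * hsign

end JacobiWeight

noncomputable def jacobiCoeff (α β : ℝ) (n k : ℕ) : ℝ :=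
  n.choose k * (risingFactorial ((n : ℝ) + α + β + 1) k / risingFactorial (α + 1) k)

lemma jacobiPoly_eq_sum_jacobiCoeff (α β : ℝ) (n : ℕ) (x : ℝ) :
    jacobiPoly α β n x = risingFactorial (α + 1) n / n ! *
      ∑ k ∈ range (n + 1), jacobiCoeff α β n k * ((x - 1) / 2) ^ k :=
  rfl

lemma continuous_jacobiPoly (α β : ℝ) (n : ℕ) : Continuous (jacobiPoly α β n) := by
  unfold jacobiPoly
  fun_prop

section Orthogonality

variable {α β : ℝ}

lemma sum_jacobiCoeff_mul_neg_one_pow_mul_div_eq_zero (hα : -1 < α) (hβ : -1 < β) {n j : ℕ}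
    (hj : j < n) :
    ∑ k ∈ range (n + 1), jacobiCoeff α β n k * (-1) ^ (j + k) *
      (risingFactorial (α + 1) (j + k) / risingFactorial (α + β + 2) (j + k)) = 0 := by
  obtain ⟨d, rfl⟩ : ∃ d, n = j + d + 1 := ⟨n - (j + 1), by omega⟩
  have hab : 0 < α + β + 2 := by linarith
  have hterm : ∀ k ∈ range (j + d + 1 + 1), jacobiCoeff α β (j + d + 1) k * (-1) ^ (j + k) *
      (risingFactorial (α + 1) (j + k) / risingFactorial (α + β + 2) (j + k))
      = (-1) ^ j / risingFactorial (α + β + 2) (j + d) * ((-1) ^ k * (j + d + 1).choose k *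
        (risingFactorial (α + 1 + k) j * risingFactorial (α + β + 2 + j + k) d)) := by
    intro k _
    have hnum : risingFactorial (α + 1) (j + k)
        = risingFactorial (α + 1) k * risingFactorial (α + 1 + k) j := by
      rw [add_comm j k, risingFactorial_add]
    have hden : risingFactorial (α + β + 2) (j + d) *
          risingFactorial (((j + d + 1 : ℕ) : ℝ) + α + β + 1) k
        = risingFactorial (α + β + 2) (j + k) * risingFactorial (α + β + 2 + j + k) d := by
      have h := risingFactorial_add (α + β + 2) (j + d) k
      rw [show j + d + k = j + k + d by omega, risingFactorial_add] at h
      convert h.symm using 3 <;> push_cast <;> ring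
    have := (risingFactorial_pos (by linarith : 0 < α + 1) k).ne'
    have := (risingFactorial_pos hab (j + k)).ne'
    have := (risingFactorial_pos hab (j + d)).ne'
    simp only [jacobiCoeff, hnum, pow_add]
    field_simp
    linear_combination ((j + d + 1).choose k * risingFactorial (α + 1 + k) j : ℝ) * hden
  rw [sum_congr rfl hterm, ← mul_sum,
    sum_range_neg_one_pow_mul_choose_mul_risingFactorial_mul_risingFactorial_eq_zero (by omega),
    mul_zero]

lemma integral_pow_mul_jacobiPoly_mul_jacobiWeight_eq_zero (hα : -1 < α) (hβ : -1 < β)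
    {n j : ℕ} (hj : j < n) :
    ∫ x in (-1:ℝ)..1, ((x - 1) / 2) ^ j * jacobiPoly α β n x * jacobiWeight α β x = 0 := by
  have hint (p : ℕ) : IntervalIntegrable (fun x => ((x - 1) / 2) ^ p * jacobiWeight α β x)
      volume (-1) 1 :=
    (intervalIntegrable_jacobiWeight hα hβ).continuousOn_mul (by fun_prop)
  have hexpand : (fun x => ((x - 1) / 2) ^ j * jacobiPoly α β n x * jacobiWeight α β x)
      = fun x => risingFactorial (α + 1) n / n ! * ∑ k ∈ range (n + 1),
          jacobiCoeff α β n k * (((x - 1) / 2) ^ (j + k) * jacobiWeight α β x) := by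
    funext x
    simp only [jacobiPoly_eq_sum_jacobiCoeff, mul_sum, sum_mul, pow_add]
    exact sum_congr rfl fun k _ => by ring
  rw [hexpand, intervalIntegral.integral_const_mul,
    intervalIntegral.integral_finsetSum fun k _ => (hint (j + k)).const_mul _]
  simp only [intervalIntegral.integral_const_mul, integral_pow_mul_jacobiWeight hα hβ]
  simp_rw [← mul_assoc (jacobiCoeff α β n _)]
  rw [← sum_mul, sum_jacobiCoeff_mul_neg_one_pow_mul_div_eq_zero hα hβ hj, zero_mul, mul_zero]

end Orthogonality

/-- For `α, β > -1`, the Jacobi polynomials with parameters `(α, β)` are pairwise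
orthogonal on `(-1, 1)` with respect to the weight `(1 - x)^α (1 + x)^β`. -/
theorem jacobiPoly_orthogonal (α β : ℝ) (hα : -1 < α) (hβ : -1 < β)
    (m n : ℕ) (hmn : m ≠ n) :
    ∫ x in (-1:ℝ)..1,
      jacobiPoly α β m x * jacobiPoly α β n x * (1 - x) ^ α * (1 + x) ^ β = 0 := by
  wlog hlt : m < n generalizing m n
  · rw [← this n m hmn.symm (lt_of_le_of_ne (not_lt.mp hlt) hmn.symm)]
    simp only [mul_comm (jacobiPoly α β m _)]
  have hint (j : ℕ) : IntervalIntegrable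
      (fun x => ((x - 1) / 2) ^ j * jacobiPoly α β n x * jacobiWeight α β x) volume (-1) 1 :=
    (intervalIntegrable_jacobiWeight hα hβ).continuousOn_mul
      (by have := continuous_jacobiPoly α β n; fun_prop)
  have hexpand :
      (fun x => jacobiPoly α β m x * jacobiPoly α β n x * (1 - x) ^ α * (1 + x) ^ β)
        = fun x => risingFactorial (α + 1) m / m ! * ∑ j ∈ range (m + 1),
            jacobiCoeff α β m j *
              (((x - 1) / 2) ^ j * jacobiPoly α β n x * jacobiWeight α β x) := by
    funext x
    simp only [jacobiPoly_eq_sum_jacobiCoeff α β m, jacobiWeight, mul_sum, sum_mul]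
    exact sum_congr rfl fun j _ => by ring
  rw [hexpand, intervalIntegral.integral_const_mul,
    intervalIntegral.integral_finsetSum fun j _ => (hint j).const_mul _]
  refine mul_eq_zero_of_right _ (sum_eq_zero fun j hj => ?_)
  rw [intervalIntegral.integral_const_mul,
    integral_pow_mul_jacobiPoly_mul_jacobiWeight_eq_zero hα hβ
      ((Nat.lt_succ_iff.mp (mem_range.mp hj)).trans_lt hlt), mul_zero]
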